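/- Let n ≥ 1 and m ≥ 1 be natural numbers, let 0 = β_0 < β_1 < ⋯ < β_n be real numbers, let z_1, …, z_m be pairwise distinct nonzero complex numbers, and let (γ_{ℓ,j}), 1 ≤ ℓ ≤ m, 1 ≤ j ≤ n, be nonnegative integers. Then there exist polynomials φ_1, …, φ_n with complex coefficients and a nonzero complex constant c such that: (i) φ_k(0) ≠ 0 and deg φ_k = Σ_{j=1}^{k} Σ_{ℓ=1}^{m} γ_{ℓ,j} for each 1 ≤ k ≤ n; and (ii) for every x > 0, the Wronskian at x (with derivatives taken within (0, ∞)) of the n+1 functions (0, ∞) → ℂ given by t ↦ t^{β_0}, t ↦ t^{β_1}·φ_1(t), …, t ↦ t^{β_n}·φ_n(t) equals c · x^{β_1 + ⋯ + β_n − n(n+1)/2} · ∏_{ℓ=1}^{m} (x − z_ℓ)^{n·γ_{ℓ,1} + (n−1)·γ_{ℓ,2} + ⋯ + γ_{ℓ,n}}. -/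

import Mathlib

/-!
The `i`-th derivative of `t ^ β * p(t)` is `t ^ (β - i)` times the polynomial obtained from `p`
by the operators `p ↦ (β - k) p + X p'`, `k < i`, so the Wronskian is
`x ^ (β_1 + ⋯ + β_n - n(n+1)/2)` times the determinant of a matrix of polynomials. That
determinant obeys the two rules of Wronskians: multiplying all functions by `t ^ s * B(t)`
multiplies it by `B ^ n` (by Leibniz's rule the new rows are triangular combinations of the old
ones, with diagonal coefficient `B`), and a constant first function reduces it to the
determinant for the derivatives of the others.

The polynomials are built by induction on `n`. Take `ρ_1, …, ρ_{n-1}` for the exponents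
`β_{j+1} - β_1` and the multiplicities `γ_{ℓ,j+1}`, put `ρ_0 = 1` and
`B = ∏_ℓ (X - z_ℓ) ^ γ_{ℓ,1}`, and choose `φ_k` with `(t ^ β_k φ_k)' = t ^ (β_k - 1) B ρ_{k-1}`.
This is possible, with `φ_k(0) ≠ 0` and `deg φ_k = deg (B ρ_{k-1})`, because `p ↦ β p + X p'`
multiplies the `k`-th coefficient by `β + k ≠ 0`. By the two rules the Wronskian gains exactly
the factor `B ^ n`.
-/

open Polynomial Finset

theorem Matrix.det_of_eq_sum_range_mul {R : Type*} [CommRing R] {n : ℕ} (F G : ℕ → Fin n → R)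
    (c : ℕ → ℕ → R) (h : ∀ i j, G i j = ∑ k ∈ range (i + 1), c i k * F k j) :
    (of fun i j : Fin n => G i j).det =
      (∏ i : Fin n, c i i) * (of fun i j : Fin n => F i j).det := by
  let L : Matrix (Fin n) (Fin n) R := of fun i k => if k ≤ i then c i k else 0
  have hL : L.IsLowerTriangular := fun i k hik => if_neg (not_le.mpr hik)
  have hGL : (of fun i j : Fin n => G i j) = L * of fun i j : Fin n => F i j := by
    ext i j
    have hrange : (range n).filter (· ≤ (i : ℕ)) = range (i + 1) := by
      ext k
      simp only [mem_filter, mem_range]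
      omega
    simp only [mul_apply, of_apply, L, ite_mul, zero_mul, Fin.le_def, h, ← hrange]
    rw [sum_filter]
    exact (Fin.sum_univ_eq_sum_range (fun k => if k ≤ (i : ℕ) then c i k * F k j else 0) n).symm
  rw [hGL, det_mul, det_of_isLowerTriangular L hL]
  simp [L]

theorem Fin.sum_Iic_succ {M : Type*} [AddCommMonoid M] {n : ℕ} (f : Fin (n + 1) → M) (k : Fin n) :
    ∑ j ∈ Iic k.succ, f j = f 0 + ∑ j ∈ Iic k, f j.succ := by
  rw [← bot_eq_zero, ← Icc_bot, Icc_eq_cons_Ioc bot_le, Finset.sum_cons, bot_eq_zero,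
    ← Fin.map_succEmb_Iic, sum_map]
  rfl

theorem Fin.sum_univ_val_cast (n : ℕ) : ∑ i : Fin (n + 1), ((i : ℕ) : ℝ) = n * (n + 1) / 2 := by
  induction n with
  | zero => simp
  | succ n ih =>
    rw [Fin.sum_univ_castSucc]
    simp only [Fin.val_castSucc, ih, Fin.val_last]
    push_cast
    ring

namespace Polynomial

section CommRing

variable {R : Type*} [CommRing R]

/-- `X * d/dX + β`, so that `d/dt (t ^ β * p(t)) = t ^ (β - 1) * (eulerOp β p)(t)`. -/
noncomputable def eulerOp (β : R) : R[X] →ₗ[R] R[X] :=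
  β • LinearMap.id + LinearMap.mulLeft R X ∘ₗ derivative

theorem eulerOp_apply (β : R) (p : R[X]) : eulerOp β p = C β * p + X * derivative p := by
  simp [eulerOp, smul_eq_C_mul]

theorem eulerOp_add_mul (β γ : R) (p q : R[X]) :
    eulerOp (β + γ) (p * q) = eulerOp β p * q + p * eulerOp γ q := by
  simp only [eulerOp_apply, derivative_mul, map_add]
  ring

theorem eval_zero_eulerOp (β : R) (p : R[X]) : (eulerOp β p).eval 0 = β * p.eval 0 := by
  simp [eulerOp_apply]

noncomputable def eulerIter : ℕ → R → R[X] →ₗ[R] R[X]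
  | 0, _ => LinearMap.id
  | i + 1, β => eulerOp (β - i) ∘ₗ eulerIter i β

@[simp]
theorem eulerIter_zero (β : R) (p : R[X]) : eulerIter 0 β p = p := rfl

theorem eulerIter_succ (i : ℕ) (β : R) (p : R[X]) :
    eulerIter (i + 1) β p = eulerOp (β - i) (eulerIter i β p) := rfl

theorem eulerIter_succ' (i : ℕ) (β : R) (p : R[X]) :
    eulerIter (i + 1) β p = eulerIter i (β - 1) (eulerOp β p) := by
  induction i with
  | zero => simp [eulerIter_succ]
  | succ i ih =>
    rw [eulerIter_succ, ih, eulerIter_succ]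
    congr 2
    push_cast
    ring

theorem eulerIter_add_mul (i : ℕ) (β γ : R) (p q : R[X]) :
    eulerIter i (β + γ) (p * q) =
      ∑ ij ∈ antidiagonal i, i.choose ij.1 • (eulerIter ij.1 β p * eulerIter ij.2 γ q) := by
  induction i with
  | zero => simp
  | succ i ih =>
    rw [sum_antidiagonal_choose_succ_nsmul
      (fun a b => eulerIter a β p * eulerIter b γ q), eulerIter_succ, ih, map_sum,
      ← sum_add_distrib]
    refine sum_congr rfl fun ij hij => ?_
    obtain rfl : ij.1 + ij.2 = i := mem_antidiagonal.mp hij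
    have hsplit : β + γ - ((ij.1 + ij.2 : ℕ) : R) = (β - ij.1) + (γ - ij.2) := by push_cast; ring
    rw [map_nsmul, hsplit, eulerOp_add_mul, ← eulerIter_succ, ← eulerIter_succ,
      Nat.choose_symm_add, smul_add, add_comm]

theorem eulerIter_succ_zero_one (i : ℕ) : eulerIter (i + 1) (0 : R) 1 = 0 := by
  simp [eulerIter_succ', eulerOp_apply]

noncomputable def eulerMatrix {n : ℕ} (b : Fin n → R) (p : Fin n → R[X]) :
    Matrix (Fin n) (Fin n) R[X] :=
  Matrix.of fun i j => eulerIter i (b j) (p j)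

theorem det_eulerMatrix_add_mul {n : ℕ} (s : R) (b : Fin n → R) (B : R[X]) (p : Fin n → R[X]) :
    (eulerMatrix (fun j => s + b j) fun j => B * p j).det = B ^ n * (eulerMatrix b p).det := by
  have h := Matrix.det_of_eq_sum_range_mul (fun k j => eulerIter k (b j) (p j))
    (fun i j => eulerIter i (s + b j) (B * p j))
    (fun i k => i.choose k * eulerIter (i - k) s B) fun i j => by
      rw [eulerIter_add_mul, ← Nat.sum_antidiagonal_swap]
      simp only [Prod.fst_swap, Prod.snd_swap]
      rw [Nat.sum_antidiagonal_eq_sum_range_succ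
        (fun k l => i.choose l • (eulerIter l s B * eulerIter k (b j) (p j)))]
      refine sum_congr rfl fun k hk => ?_
      rw [Nat.choose_symm (Nat.lt_succ_iff.mp (mem_range.mp hk)), nsmul_eq_mul]
      ring
  simpa [eulerMatrix] using h

theorem det_eulerMatrix_cons_one {n : ℕ} (b : Fin (n + 1) → R) (hb : b 0 = 0)
    (p : Fin n → R[X]) :
    (eulerMatrix b (Fin.cons 1 p)).det =
      (eulerMatrix (fun j => b j.succ - 1) fun j => eulerOp (b j.succ) (p j)).det := by
  rw [Matrix.det_succ_column_zero, Fin.sum_univ_succ, Finset.sum_eq_zero]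
  · simp [eulerMatrix, hb, eulerIter_succ', Matrix.submatrix]
  · intro i _
    simp [eulerMatrix, hb, eulerIter_succ_zero_one]

end CommRing

section Field

variable {K : Type*} [Field K] {β : K}

theorem coeff_eulerOp (β : K) (p : K[X]) (k : ℕ) :
    (eulerOp β p).coeff k = (β + k) * p.coeff k := by
  rcases k with _ | k
  · simp [eulerOp_apply]
  · simp only [eulerOp_apply, coeff_add, coeff_C_mul, coeff_X_mul, coeff_derivative]
    push_cast
    ring

theorem support_eulerOp (hβ : ∀ k : ℕ, β + k ≠ 0) (p : K[X]) :
    (eulerOp β p).support = p.support := by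
  ext k
  simp [mem_support_iff, coeff_eulerOp, hβ k]

theorem natDegree_eulerOp (hβ : ∀ k : ℕ, β + k ≠ 0) (p : K[X]) :
    (eulerOp β p).natDegree = p.natDegree := by
  simp only [natDegree, degree, support_eulerOp hβ]

theorem eulerOp_surjective (hβ : ∀ k : ℕ, β + k ≠ 0) : Function.Surjective (eulerOp β) := by
  intro q
  refine ⟨∑ k ∈ range (q.natDegree + 1), monomial k (q.coeff k / (β + k)), ?_⟩
  ext k
  rw [coeff_eulerOp, finsetSum_coeff]
  simp only [coeff_monomial, sum_ite_eq', mem_range, Nat.lt_succ_iff]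
  split_ifs with hk
  · exact mul_div_cancel₀ _ (hβ k)
  · simp [coeff_eq_zero_of_natDegree_lt (not_le.mp hk)]

end Field

theorem exists_det_eulerMatrix_eq_prod_pow (n : ℕ) {b : Fin (n + 1) → ℝ} (hb0 : b 0 = 0)
    (hb : StrictMono b) {B : Fin n → ℂ[X]} (hB : ∀ j, (B j).eval 0 ≠ 0) :
    ∃ φ : Fin n → ℂ[X],
      (∀ k, (φ k).eval 0 ≠ 0 ∧ (φ k).natDegree = ∑ j ∈ Iic k, (B j).natDegree) ∧
      (eulerMatrix (fun j => (b j : ℂ)) (Fin.cons 1 φ)).det = ∏ j : Fin n, B j ^ (n - j) := by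
  induction n with
  | zero => exact ⟨Fin.elim0, fun k => k.elim0, by simp [eulerMatrix]⟩
  | succ n ih =>
    obtain ⟨ρ, hρ, hdetρ⟩ := ih (b := fun j => b j.succ - b 1) (by simp)
      (fun i j hij => by simpa using hb (Fin.succ_lt_succ_iff.mpr hij))
      (B := fun j => B j.succ) (fun j => hB j.succ)
    set ψ : Fin (n + 1) → ℂ[X] := fun k => B 0 * (Fin.cons 1 ρ : Fin (n + 1) → ℂ[X]) k
    have hψ : ∀ k, (ψ k).eval 0 ≠ 0 ∧ (ψ k).natDegree = ∑ j ∈ Iic k, (B j).natDegree := by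
      have hB0 : B 0 ≠ 0 := fun h => hB 0 (by simp [h])
      refine Fin.cases ⟨?_, ?_⟩ fun k => ⟨?_, ?_⟩
      · simpa [ψ] using hB 0
      · simp [ψ, show Iic (0 : Fin (n + 1)) = {0} from Iic_bot]
      · simpa [ψ] using ⟨hB 0, (hρ k).1⟩
      · have hρk : ρ k ≠ 0 := fun h => (hρ k).1 (by simp [h])
        simp [ψ, natDegree_mul hB0 hρk, (hρ k).2, Fin.sum_Iic_succ]
    have hpos : ∀ k : Fin (n + 1), ∀ i : ℕ, (b k.succ : ℂ) + i ≠ 0 := fun k i => by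
      have : 0 < b k.succ := hb0 ▸ hb k.succ_pos
      exact_mod_cast (by positivity : 0 < b k.succ + i).ne'
    choose φ hφ using fun k => eulerOp_surjective (hpos k) (ψ k)
    refine ⟨φ, fun k => ⟨?_, ?_⟩, ?_⟩
    · have h := (hψ k).1
      rw [← hφ k, eval_zero_eulerOp] at h
      exact right_ne_zero_of_mul h
    · rw [← natDegree_eulerOp (hpos k), hφ k, (hψ k).2]
    · have hshift : (fun j : Fin (n + 1) => (b j.succ : ℂ) - 1) =
          fun j => ((b 1 - 1 : ℝ) : ℂ) + ((b j.succ - b 1 : ℝ) : ℂ) := by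
        funext j
        push_cast
        ring
      rw [det_eulerMatrix_cons_one _ (by simp [hb0])]
      simp only [hφ]
      rw [hshift, det_eulerMatrix_add_mul, hdetρ, Fin.prod_univ_succ]
      simp

end Polynomial

theorem hasDerivAt_rpow_mul_eval (β : ℝ) (p : ℂ[X]) {x : ℝ} (hx : 0 < x) :
    HasDerivAt (fun t : ℝ => ((t ^ β : ℝ) : ℂ) * p.eval (t : ℂ))
      (((x ^ (β - 1) : ℝ) : ℂ) * (eulerOp (β : ℂ) p).eval (x : ℂ)) x := by
  have hpow := (Real.hasDerivAt_rpow_const (p := β) (Or.inl hx.ne')).ofReal_comp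
  refine (hpow.mul (p.hasDerivAt (x : ℂ)).comp_ofReal).congr_deriv ?_
  have hx' : x ^ β = x ^ (β - 1) * x := by
    rw [← Real.rpow_add_one hx.ne', sub_add_cancel]
  simp only [eulerOp_apply, eval_add, eval_mul, eval_C, eval_X, hx']
  push_cast
  ring

theorem iteratedDerivWithin_rpow_mul_eval (i : ℕ) (β : ℝ) (p : ℂ[X]) {x : ℝ} (hx : 0 < x) :
    iteratedDerivWithin i (fun t : ℝ => ((t ^ β : ℝ) : ℂ) * p.eval (t : ℂ)) (Set.Ioi 0) x =
      ((x ^ (β - i) : ℝ) : ℂ) * (eulerIter i (β : ℂ) p).eval (x : ℂ) := by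
  induction i generalizing x with
  | zero => simp
  | succ i ih =>
    have heq : Set.EqOn
        (iteratedDerivWithin i (fun t : ℝ => ((t ^ β : ℝ) : ℂ) * p.eval (t : ℂ)) (Set.Ioi 0))
        (fun t : ℝ => ((t ^ (β - i) : ℝ) : ℂ) * (eulerIter i (β : ℂ) p).eval (t : ℂ))
        (Set.Ioi 0) :=
      fun t ht => ih ht
    rw [iteratedDerivWithin_succ, derivWithin_congr heq (heq hx),
      derivWithin_of_isOpen isOpen_Ioi hx, (hasDerivAt_rpow_mul_eval _ _ hx).deriv, eulerIter_succ]
    push_cast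
    ring_nf

theorem det_iteratedDerivWithin_rpow_mul_eval {n : ℕ} (b : Fin n → ℝ) (p : Fin n → ℂ[X]) {x : ℝ}
    (hx : 0 < x) :
    (Matrix.of fun i j : Fin n => iteratedDerivWithin i
        (fun t : ℝ => ((t ^ b j : ℝ) : ℂ) * (p j).eval (t : ℂ)) (Set.Ioi 0) x).det =
      ((x ^ (∑ j, b j - ∑ i : Fin n, (i : ℝ)) : ℝ) : ℂ) *
        (eulerMatrix (fun j => (b j : ℂ)) p).det.eval (x : ℂ) := by
  have hentries : (Matrix.of fun i j : Fin n => iteratedDerivWithin i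
        (fun t : ℝ => ((t ^ b j : ℝ) : ℂ) * (p j).eval (t : ℂ)) (Set.Ioi 0) x) =
      Matrix.diagonal (fun i : Fin n => ((x ^ (-(i : ℝ)) : ℝ) : ℂ)) *
        (eulerMatrix (fun j => (b j : ℂ)) p).map (eval (x : ℂ)) *
          Matrix.diagonal fun j => ((x ^ b j : ℝ) : ℂ) := by
    ext i j
    rw [Matrix.of_apply, iteratedDerivWithin_rpow_mul_eval _ _ _ hx, sub_eq_add_neg,
      Real.rpow_add hx]
    simp [eulerMatrix, Matrix.mul_diagonal, Matrix.diagonal_mul]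
    ring
  rw [hentries, Matrix.det_mul, Matrix.det_mul, Matrix.det_diagonal, Matrix.det_diagonal,
    ← coe_evalRingHom, RingHom.map_det, RingHom.mapMatrix_apply, sub_eq_add_neg,
    Real.rpow_add hx, Real.rpow_sum_of_pos hx, ← sum_neg_distrib, Real.rpow_sum_of_pos hx]
  push_cast
  ring

theorem exists_poly_wronskian_prescribed_zeros_general (n m : ℕ)
    (β : Fin (n + 1) → ℝ) (hβ0 : β 0 = 0) (hβ : StrictMono β)
    (z : Fin m → ℂ) (hz0 : ∀ ℓ, z ℓ ≠ 0)
    (γ : Fin m → Fin n → ℕ) :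
    ∃ (φ : Fin n → Polynomial ℂ) (c : ℂ), c ≠ 0 ∧
      (∀ k : Fin n, (φ k).eval 0 ≠ 0 ∧
        (φ k).natDegree = ∑ j ∈ Finset.Iic k, ∑ ℓ : Fin m, γ ℓ j) ∧
      (∀ x : ℝ, 0 < x →
        Matrix.det (Matrix.of fun i j : Fin (n + 1) =>
          iteratedDerivWithin (i : ℕ)
            (Fin.cases (motive := fun _ => ℝ → ℂ)
              (fun t : ℝ => ((t ^ β 0 : ℝ) : ℂ))
              (fun k (t : ℝ) => ((t ^ β k.succ : ℝ) : ℂ) * (φ k).eval (t : ℂ)) j)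
            (Set.Ioi (0 : ℝ)) x) =
        c * ((x ^ ((∑ k : Fin n, β k.succ) - (n * (n + 1) : ℝ) / 2) : ℝ) : ℂ) *
          ∏ ℓ : Fin m, ((x : ℂ) - z ℓ) ^ (∑ j : Fin n, (n - (j : ℕ)) * γ ℓ j)) := by
  obtain ⟨φ, hφ, hdet⟩ := exists_det_eulerMatrix_eq_prod_pow n hβ0 hβ
    (B := fun j => ∏ ℓ, (X - C (z ℓ)) ^ γ ℓ j) fun j => by simp [eval_prod, prod_eq_zero_iff, hz0]
  refine ⟨φ, 1, one_ne_zero, fun k => ⟨(hφ k).1, ?_⟩, fun x hx => ?_⟩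
  · simp [(hφ k).2, natDegree_prod_of_monic _ _ fun ℓ _ => (monic_X_sub_C (z ℓ)).pow _]
  have hfun : (Fin.cases (motive := fun _ => ℝ → ℂ) (fun t : ℝ => ((t ^ β 0 : ℝ) : ℂ))
      fun k (t : ℝ) => ((t ^ β k.succ : ℝ) : ℂ) * (φ k).eval (t : ℂ)) =
      fun j t => ((t ^ β j : ℝ) : ℂ) * ((Fin.cons 1 φ : Fin (n + 1) → ℂ[X]) j).eval (t : ℂ) := by
    funext j t
    cases j using Fin.cases <;> simp
  rw [hfun, det_iteratedDerivWithin_rpow_mul_eval β _ hx, hdet, Fin.sum_univ_succ (f := β), hβ0,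
    Fin.sum_univ_val_cast]
  simp only [eval_prod, eval_pow, eval_sub, eval_X, eval_C, ← prod_pow, ← pow_mul]
  rw [prod_comm]
  simp only [prod_pow_eq_pow_sum, mul_comm, zero_add, one_mul]

/-- Existence of polynomials `φ_1, …, φ_n`, nonvanishing at `0` and of prescribed degrees,
such that the Wronskian of `t^{β_0}, t^{β_1}φ_1(t), …, t^{β_n}φ_n(t)` equals
`c · x^{β_1+⋯+β_n − n(n+1)/2} · ∏_ℓ (x − z_ℓ)^{n γ_{ℓ,1}+⋯+γ_{ℓ,n}}`. -/
theorem exists_poly_wronskian_prescribed_zeros (n m : ℕ) (hn : 1 ≤ n) (hm : 1 ≤ m)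
    (β : Fin (n + 1) → ℝ) (hβ0 : β 0 = 0) (hβ : StrictMono β)
    (z : Fin m → ℂ) (hz : Function.Injective z) (hz0 : ∀ ℓ, z ℓ ≠ 0)
    (γ : Fin m → Fin n → ℕ) :
    ∃ (φ : Fin n → Polynomial ℂ) (c : ℂ), c ≠ 0 ∧
      (∀ k : Fin n, (φ k).eval 0 ≠ 0 ∧
        (φ k).natDegree = ∑ j ∈ Finset.Iic k, ∑ ℓ : Fin m, γ ℓ j) ∧
      (∀ x : ℝ, 0 < x →
        Matrix.det (Matrix.of fun i j : Fin (n + 1) =>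
          iteratedDerivWithin (i : ℕ)
            (Fin.cases (motive := fun _ => ℝ → ℂ)
              (fun t : ℝ => ((t ^ β 0 : ℝ) : ℂ))
              (fun k (t : ℝ) => ((t ^ β k.succ : ℝ) : ℂ) * (φ k).eval (t : ℂ)) j)
            (Set.Ioi (0 : ℝ)) x) =
        c * ((x ^ ((∑ k : Fin n, β k.succ) - (n * (n + 1) : ℝ) / 2) : ℝ) : ℂ) *
          ∏ ℓ : Fin m, ((x : ℂ) - z ℓ) ^ (∑ j : Fin n, (n - (j : ℕ)) * γ ℓ j)) :=
  exists_poly_wronskian_prescribed_zeros_general n m β hβ0 hβ z hz0 γ
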